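/- Let f ∈ ℤ[X] with deg f = n ≥ 2 and let p be a prime not dividing the leading coefficient of f. If v_p(disc f) = 1, then the reduction f̄ ∈ F_p[X] factors as f̄ = (X − α)² g(X) over the algebraic closure of F_p, where α ∈ F_p (the repeated root is F_p-rational) and g is separable with g(α) ≠ 0. -/

import Mathlib

open Polynomial

/-- The Sylvester matrix of two polynomials. -/
noncomputable def sylvesterMatrix {R : Type*} [CommRing R] (f g : R[X]) :
    Matrix (Fin (f.natDegree + g.natDegree)) (Fin (f.natDegree + g.natDegree)) R :=
  Matrix.of fun i j =>
    if (i : ℕ) < g.natDegree then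
      (if (i : ℕ) ≤ (j : ℕ) then f.coeff ((j : ℕ) - (i : ℕ)) else 0)
    else
      (if (i : ℕ) - g.natDegree ≤ (j : ℕ) then g.coeff ((j : ℕ) - ((i : ℕ) - g.natDegree)) else 0)

/-- The resultant of two polynomials, as the determinant of the Sylvester matrix. -/
noncomputable def resultant {R : Type*} [CommRing R] (f g : R[X]) : R :=
  (sylvesterMatrix f g).det

/-- The discriminant of an integer polynomial:
`disc f = (-1)^(n(n-1)/2) * Res(f, f') / lc(f)`. -/
noncomputable def intDisc (f : ℤ[X]) : ℤ :=
  (-1) ^ (f.natDegree * (f.natDegree - 1) / 2) * (_root_.resultant f (derivative f) / f.leadingCoeff)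

/-! Reduce mod `p` and look at the Sylvester matrix `S` of `f` and `f'`. A common factor `G` of
`f̄` and `f̄'` of degree `≥ 2`, say `f̄ = G u` and `f̄' = G v`, gives two kernel vectors of `S mod p`,
`(-U, V)` and `X • (-U, V)` for lifts `U`, `V` of `u`, `v`; they stay independent mod `p`, and
turning two columns of `S` into these combinations shows `p² ∣ det S = ± lc f · disc f`. Since
`v_p(disc f) = 1`, every common factor of `f̄` and `f̄'` is linear, and one exists since
`p ∣ disc f`; its root `α` lies in `𝔽_p`. Then `α` is a double but not a triple root of `f̄`, and
the cofactor `g` is squarefree: otherwise `(X - α)²` or `(X - α) h` with `h² ∣ g` would be a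
common factor of degree two. -/

open Matrix

namespace Matrix

variable {R ι : Type*} [CommRing R] [Fintype ι] [DecidableEq ι]

theorem det_updateCol_mulVec (M : Matrix ι ι R) (j : ι) (c : ι → R) :
    (M.updateCol j (M *ᵥ c)).det = c j * M.det := by
  rw [← smul_eq_mul, ← det_updateCol_sum]
  congr
  ext k
  simp [mulVec, dotProduct, mul_comm]

theorem mulVec_updateCol_of_eq_zero (M : Matrix ι ι R) {j : ι} {c : ι → R} (hc : c j = 0)
    (w : ι → R) : M.updateCol j w *ᵥ c = M *ᵥ c := by
  ext k
  refine Finset.sum_congr rfl fun l _ => ?_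
  rcases eq_or_ne l j with rfl | hl
  · simp [hc]
  · simp [updateCol_ne hl]

theorem sq_dvd_det_of_mulVec_dvd [IsDomain R] {p : R} (hp : Prime p) (M : Matrix ι ι R)
    {u v : ι → R} (hu : ∀ k, p ∣ (M *ᵥ u) k) (hv : ∀ k, p ∣ (M *ᵥ v) k) {i j : ι}
    (hij : i ≠ j) (hui : ¬ p ∣ u i) (huj : u j = 0) (hvj : ¬ p ∣ v j) : p ^ 2 ∣ M.det := by
  choose u' hu' using hu
  choose v' hv' using hv
  have key : u i * (v j * M.det) = p ^ 2 * ((M.updateCol i u').updateCol j v').det := by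
    rw [← det_updateCol_mulVec, ← det_updateCol_mulVec, mulVec_updateCol_of_eq_zero _ huj,
      show M *ᵥ u = p • u' from funext hu', show M *ᵥ v = p • v' from funext hv',
      det_updateCol_smul, ← updateCol_comm _ hij, det_updateCol_smul]
    ring
  exact hp.pow_dvd_of_dvd_mul_left 2 hvj <| hp.pow_dvd_of_dvd_mul_left 2 hui ⟨_, key⟩

end Matrix

namespace Polynomial

variable {R : Type*} [CommRing R]

theorem sylvester_mulVec_basisProd_repr {f g : R[X]} {m n : ℕ} (hf : f.natDegree ≤ m)
    (hg : g.natDegree ≤ n) (x : R[X]_m × R[X]_n) (k : Fin (m + n)) :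
    (sylvester f g m n *ᵥ (degreeLT.basisProd R m n).repr x) k =
      (f * (x.2 : R[X]) + g * (x.1 : R[X])).coeff k := by
  rw [← toMatrix_sylvesterMap' f g hf hg]
  exact congrFun (LinearMap.toMatrix_mulVec_repr (degreeLT.basisProd R m n) _ _ x) k

theorem degreeLT.basisProd_repr_castAdd {m n : ℕ} (x : R[X]_m × R[X]_n) (i : Fin m) :
    (degreeLT.basisProd R m n).repr x (i.castAdd n) = (x.1 : R[X]).coeff i := by
  simp [degreeLT.basisProd]

theorem sq_dvd_resultant_of_C_dvd_mul_sub_mul [IsDomain R] {p : R} (hp : Prime p)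
    {f g U V : R[X]} {m n : ℕ} (hf : f.natDegree ≤ m) (hg : g.natDegree ≤ n)
    (hU : U.degree + 1 < m) (hV : V.degree + 1 < n) (hUlc : ¬ p ∣ U.leadingCoeff)
    (hdvd : C p ∣ f * V - g * U) : p ^ 2 ∣ resultant f g m n := by
  have hU0 : U ≠ 0 := by rintro rfl; simp at hUlc
  have hdm : U.natDegree + 1 < m := by
    rw [degree_eq_natDegree hU0] at hU; exact_mod_cast hU
  have hmem {P : R[X]} {k : ℕ} (h : P.degree + 1 < k) : P ∈ R[X]_k ∧ X * P ∈ R[X]_k := by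
    refine ⟨mem_degreeLT.2 ?_, mem_degreeLT.2 ?_⟩
    · exact lt_of_le_of_lt (le_add_of_nonneg_right zero_le_one) h
    · rwa [X_mul, degree_mul_X]
  let x₁ : R[X]_m × R[X]_n := (⟨-U, neg_mem (hmem hU).1⟩, ⟨V, (hmem hV).1⟩)
  let x₂ : R[X]_m × R[X]_n := (⟨-(X * U), neg_mem (hmem hU).2⟩, ⟨X * V, (hmem hV).2⟩)
  have hcoeff (x : R[X]_m × R[X]_n) (hx : C p ∣ f * x.2 + g * x.1) (k : Fin (m + n)) :
      p ∣ (sylvester f g m n *ᵥ (degreeLT.basisProd R m n).repr x) k := by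
    rw [sylvester_mulVec_basisProd_repr hf hg]
    exact (C_dvd_iff_dvd_coeff _ _).1 hx k
  -- At the coordinates `deg U` and `deg U + 1`, `x₁` and `x₂` form a triangular block with
  -- diagonal `-lc U`.
  refine sq_dvd_det_of_mulVec_dvd hp _ (hcoeff x₁ ?_) (hcoeff x₂ ?_)
    (i := Fin.castAdd n ⟨U.natDegree, by omega⟩) (j := Fin.castAdd n ⟨U.natDegree + 1, hdm⟩)
    (by simp [Fin.ext_iff]) ?_ ?_ ?_
  · convert hdvd using 1
    simp [x₁]
    ring
  · convert hdvd.mul_left X using 1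
    simp [x₂]
    ring
  · rw [degreeLT.basisProd_repr_castAdd]
    simpa [x₁] using hUlc
  · rw [degreeLT.basisProd_repr_castAdd]
    simp [x₁, coeff_eq_zero_of_natDegree_lt]
  · rw [degreeLT.basisProd_repr_castAdd]
    simpa [x₂] using hUlc

theorem sq_dvd_resultant_of_dvd_map {S : Type*} [CommRing S] [IsDomain R] [IsDomain S] {p : R}
    (hp : Prime p) {φ : R →+* S} (hφ : Function.Surjective φ)
    (hker : RingHom.ker φ = Ideal.span {p}) {f g : R[X]} {n : ℕ} (hlc : φ f.leadingCoeff ≠ 0)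
    (hg : g.natDegree ≤ n) {G : S[X]} (hG : 2 ≤ G.natDegree) (hGf : G ∣ f.map φ)
    (hGg : G ∣ g.map φ) : p ^ 2 ∣ resultant f g f.natDegree n := by
  have hdvd_iff (r : R) : p ∣ r ↔ φ r = 0 := by
    rw [← RingHom.mem_ker, hker, Ideal.mem_span_singleton]
  obtain ⟨u, hu⟩ := hGf
  obtain ⟨v, hv⟩ := hGg
  obtain ⟨U, rfl, hU⟩ := exists_degree_eq_of_mem_lifts ((mem_lifts u).2 (map_surjective φ hφ u))
  obtain ⟨V, rfl, hV⟩ := exists_degree_eq_of_mem_lifts ((mem_lifts v).2 (map_surjective φ hφ v))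
  have hfdeg := natDegree_map_of_leadingCoeff_ne_zero φ hlc
  have hf0 : f.map φ ≠ 0 := fun h => hlc (by rw [leadingCoeff, ← coeff_map, h, coeff_zero])
  have hG0 : G ≠ 0 := by rintro rfl; simp at hu; exact hf0 hu
  have hu0 : U.map φ ≠ 0 := by rintro h; rw [h, mul_zero] at hu; exact hf0 hu
  refine sq_dvd_resultant_of_C_dvd_mul_sub_mul hp le_rfl hg (U := U) (V := V) ?_ ?_ ?_ ?_
  · have := hu ▸ natDegree_mul hG0 hu0
    rw [hU, degree_eq_natDegree hu0]
    exact_mod_cast (by omega : (U.map φ).natDegree + 1 < f.natDegree)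
  · rcases eq_or_ne (V.map φ) 0 with hv0 | hv0
    · simp [hV, hv0]
    have := hv ▸ natDegree_mul hG0 hv0
    have := natDegree_map_le (f := φ) (p := g)
    rw [hV, degree_eq_natDegree hv0]
    exact_mod_cast (by omega : (V.map φ).natDegree + 1 < n)
  · rw [hdvd_iff, leadingCoeff, ← coeff_map, natDegree_eq_of_degree_eq hU]
    exact leadingCoeff_ne_zero.2 hu0
  · rw [C_dvd_iff_dvd_coeff]
    intro k
    rw [hdvd_iff, ← coeff_map]
    simp only [Polynomial.map_sub, Polynomial.map_mul, hu, hv]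
    rw [mul_right_comm G, sub_self, coeff_zero]

theorem resultant_ne_zero_of_isCoprime [IsDomain R] {F G : R[X]} {n : ℕ} (hF : F ≠ 0)
    (hG : G.natDegree ≤ n) (h : IsCoprime F G) : resultant F G F.natDegree n ≠ 0 := by
  obtain ⟨k, rfl⟩ := Nat.exists_eq_add_of_le hG
  rw [resultant_add_right_deg F G F.natDegree G.natDegree k le_rfl]
  exact mul_ne_zero (pow_ne_zero _ (leadingCoeff_ne_zero.2 hF)) (resultant_ne_zero F G h)

variable {k : Type*} [Field k]

theorem natDegree_pos_of_ne_zero_of_nonunit {D : k[X]} (hD0 : D ≠ 0) (hD : ¬ IsUnit D) :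
    0 < D.natDegree :=
  natDegree_pos_iff_degree_pos.2 (degree_pos_of_ne_zero_of_nonunit hD0 hD)

theorem exists_eq_X_sub_C_sq_mul_squarefree {F : k[X]} (hF : F ≠ 0)
    (hcop : ¬ IsCoprime F (derivative F))
    (hdeg : ∀ D : k[X], D ∣ F → D ∣ derivative F → D.natDegree ≤ 1) :
    ∃ a g, F = (X - C a) ^ 2 * g ∧ Squarefree g ∧ g.eval a ≠ 0 := by
  obtain ⟨D, hDu, hD0, hDF, hDF'⟩ : ∃ D ∈ nonunits k[X], D ≠ 0 ∧ D ∣ F ∧ D ∣ derivative F := by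
    by_contra! h
    exact hcop (EuclideanDomain.isCoprime_of_dvd (by simp [hF]) h)
  obtain ⟨a, ha⟩ : ∃ a, D.IsRoot a := by
    refine exists_root_of_degree_eq_one ?_
    rw [degree_eq_natDegree hD0,
      le_antisymm (hdeg D hDF hDF') (natDegree_pos_of_ne_zero_of_nonunit hD0 hDu)]
    rfl
  have hroot : (X - C a) ∣ D := dvd_iff_isRoot.2 ha
  obtain ⟨g, rfl⟩ : (X - C a) ^ 2 ∣ F := by
    rw [← le_rootMultiplicity_iff hF, Nat.succ_le_iff, one_lt_rootMultiplicity_iff_isRoot hF,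
      ← dvd_iff_isRoot, ← dvd_iff_isRoot]
    exact ⟨hroot.trans hDF, hroot.trans hDF'⟩
  have hg0 : g ≠ 0 := by rintro rfl; simp at hF
  refine ⟨a, g, rfl, fun H hH => ?_, fun hga => ?_⟩
  · by_contra hHu
    have hH0 : H ≠ 0 := by rintro rfl; simp_all
    have hQ : ((X - C a) * H) ^ 2 ∣ (X - C a) ^ 2 * g := by
      rw [mul_pow, sq H]; exact mul_dvd_mul_left _ hH
    have := hdeg _ ((dvd_pow_self _ two_ne_zero).trans hQ)
      (by simpa using pow_sub_one_dvd_derivative_of_pow_dvd hQ)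
    rw [natDegree_mul (X_sub_C_ne_zero a) hH0, natDegree_X_sub_C] at this
    have := natDegree_pos_of_ne_zero_of_nonunit hH0 hHu
    omega
  · obtain ⟨t, rfl⟩ := dvd_iff_isRoot.2 hga
    have hQ : (X - C a) ^ 3 ∣ (X - C a) ^ 2 * ((X - C a) * t) := ⟨t, by ring⟩
    have := hdeg _ ((pow_dvd_pow _ (by norm_num)).trans hQ)
      (pow_sub_one_dvd_derivative_of_pow_dvd hQ)
    rw [natDegree_pow, natDegree_X_sub_C] at this
    omega

end Polynomial

theorem sylvesterMatrix_eq_transpose_sylvester {R : Type*} [CommRing R] (f g : R[X]) :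
    sylvesterMatrix f g = ((sylvester g f g.natDegree f.natDegree).submatrix
      (finCongr (add_comm _ _)) (finCongr (add_comm _ _)))ᵀ := by
  ext ⟨i, hi⟩ ⟨j, hj⟩
  by_cases h : i < g.natDegree <;>
  simp only [sylvesterMatrix, sylvester, of_apply, transpose_apply, submatrix_apply,
    finCongr_apply, Fin.addCases, Fin.cast_mk, h, dite_true, dite_false, Fin.castLT_mk,
    Fin.subNat_mk, Set.mem_Icc, eq_rec_constant, if_true, if_false] <;>
  split_ifs <;> first | rfl | omega | (apply coeff_eq_zero_of_natDegree_lt; omega)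

theorem resultant_eq_resultant_swap {R : Type*} [CommRing R] (f g : R[X]) :
    _root_.resultant f g = Polynomial.resultant g f := by
  rw [_root_.resultant, sylvesterMatrix_eq_transpose_sylvester, det_transpose,
    det_submatrix_equiv_self, Polynomial.resultant]

theorem intDisc_eq_discr {f : ℤ[X]} (hf : 0 < f.natDegree) : intDisc f = f.discr := by
  have hlc : f.leadingCoeff ≠ 0 := by rintro h; simp_all
  rw [intDisc, resultant_eq_resultant_swap, natDegree_derivative, resultant_comm,
    resultant_deriv (natDegree_pos_iff_degree_pos.1 hf), mul_comm (f.natDegree - 1),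
    (Nat.even_mul_pred_self _).neg_one_pow, one_mul, mul_assoc, mul_left_comm _ f.leadingCoeff,
    Int.mul_ediv_cancel_left _ hlc, ← mul_assoc, ← pow_add, ← two_mul, pow_mul, neg_one_sq,
    one_pow, one_mul]

theorem dvd_and_not_sq_dvd_of_padicValInt_eq_one {p : ℕ} [Fact p.Prime] {x : ℤ} (hx : x ≠ 0)
    (hv : padicValInt p x = 1) : (p : ℤ) ∣ x ∧ ¬ (p : ℤ) ^ 2 ∣ x := by
  refine ⟨pow_one (p : ℤ) ▸ (padicValInt_dvd_iff 1 x).2 (.inr hv.ge), fun h => ?_⟩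
  rcases (padicValInt_dvd_iff 2 x).1 h with h | h
  · exact hx h
  · omega

theorem factorization_of_padicValInt_disc_eq_one
    (f : ℤ[X]) (hn : 2 ≤ f.natDegree) (p : ℕ) [Fact p.Prime]
    (hlc : ¬ (p : ℤ) ∣ f.leadingCoeff)
    (hdisc : intDisc f ≠ 0) (hv : padicValInt p (intDisc f) = 1) :
    ∃ a : ZMod p, ∃ g : Polynomial (AlgebraicClosure (ZMod p)),
      f.map (Int.castRingHom (AlgebraicClosure (ZMod p))) =
        (X - C (algebraMap (ZMod p) (AlgebraicClosure (ZMod p)) a)) ^ 2 * g ∧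
      Squarefree g ∧
      Polynomial.eval (algebraMap (ZMod p) (AlgebraicClosure (ZMod p)) a) g ≠ 0 := by
  have hp : Prime (p : ℤ) := Nat.prime_iff_prime_int.1 Fact.out
  set φ := Int.castRingHom (ZMod p)
  have hlcφ : φ f.leadingCoeff ≠ 0 := by simpa [φ, ZMod.intCast_zmod_eq_zero_iff_dvd] using hlc
  have hf0 : f.map φ ≠ 0 := fun h => hlcφ (by rw [leadingCoeff, ← coeff_map, h, coeff_zero])
  obtain ⟨hdvd, hndvd⟩ := dvd_and_not_sq_dvd_of_padicValInt_eq_one hdisc hv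
  rw [intDisc_eq_discr (by omega)] at hdvd hndvd
  have hres := resultant_deriv (natDegree_pos_iff_degree_pos.1 (by omega : 0 < f.natDegree))
  have hcop : ¬ IsCoprime (f.map φ) (derivative (f.map φ)) := by
    refine fun h => resultant_ne_zero_of_isCoprime hf0
      (natDegree_map_le.trans (natDegree_derivative_le f)) (derivative_map f φ ▸ h) ?_
    rw [natDegree_map_of_leadingCoeff_ne_zero φ hlcφ, resultant_map_map, hres]
    exact (ZMod.intCast_zmod_eq_zero_iff_dvd _ p).2 (dvd_mul_of_dvd_right hdvd _)
  obtain ⟨a, g, hfg, hsq, hga⟩ := exists_eq_X_sub_C_sq_mul_squarefree hf0 hcop fun D hD hD' => by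
    by_contra! hD2
    refine hndvd (hp.pow_dvd_of_dvd_mul_left 2 hlc ?_)
    rw [← (isUnit_neg_one.pow _).dvd_mul_left, ← mul_assoc, ← hres]
    exact sq_dvd_resultant_of_dvd_map hp ZMod.intCast_surjective (ZMod.ker_intCastRingHom p)
      hlcφ (natDegree_derivative_le f) hD2 hD (derivative_map f φ ▸ hD')
  refine ⟨a, g.map (algebraMap _ _), ?_,
    (PerfectField.separable_iff_squarefree.2 hsq).map.squarefree, ?_⟩
  · rw [← RingHom.ext_int ((algebraMap (ZMod p) (AlgebraicClosure (ZMod p))).comp φ)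
      (Int.castRingHom _), ← Polynomial.map_map, hfg]
    simp
  · simpa [eval_map_algebraMap, aeval_algebraMap_apply] using hga
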